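/- (Theorem 2, offline monotonic improvement bound over the behavior policy.) Let π, π̂_β and π_D be policies (π̂_β the estimated behavior policy, π_D a policy representing the offline dataset) and write ρ_D = ρ_{π_D}. Define J_Δ(π, π̂_β) = J(π) − J(π̂_β), the approximation Ĵ_Δ(π, π̂_β) = Σ_s ρ_D(s) Σ_a π(a|s) A_{π̂_β}(s,a), and 𝔸 = max_{s,a} |A_{π̂_β}(s,a)|. Then J_Δ(π, π̂_β) ≥ Ĵ_Δ(π, π̂_β) − (4γ/(1−γ)) · 𝔸 · (max_s D_TV(π‖π̂_β)[s]) · Σ_s ρ_{π̂_β}(s) D_TV(π‖π̂_β)[s] − (4γ/(1−γ)) · 𝔸 · (max_s D_TV(π‖π̂_β)[s]) · Σ_s ρ_D(s) D_TV(π_D‖π̂_β)[s]. -/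

import Mathlib

/-!
Put `g s = ∑ₐ π(a|s) A_β(s,a)` and let `Pπ, Pβ, P_D` be the state-transition matrices. The value
gap `W = V_π - V_β` solves `W = g + γ Pπ W`; with `h = (I - γ Pβ)⁻¹ g`, the two visitation equations
give `d₀ ⬝ W = ρ_D ⬝ g + γ ρβ ⬝ (Pπ - Pβ) W - γ ρ_D ⬝ (P_D - Pβ) h`.
Both `W` and `h` are bounded by `‖g‖∞ / (1 - γ)`, a row of `Pπ - Pβ` changes a function bounded by
`M` by at most `2 D_TV M`, and `‖g‖∞ ≤ 2 𝔸 max D_TV(π‖π̂β)` because the advantages of `π̂β`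
average to zero under `π̂β`.
-/

open Finset Matrix

section FiniteSums

variable {ι : Type*} [Fintype ι]

lemma abs_dotProduct_le_of_sum_eq_one {q f : ι → ℝ} {M : ℝ} (hq0 : ∀ i, 0 ≤ q i)
    (hq1 : ∑ i, q i = 1) (hf : ∀ i, |f i| ≤ M) : |q ⬝ᵥ f| ≤ M :=
  calc |q ⬝ᵥ f| ≤ ∑ i, |q i * f i| := abs_sum_le_sum_abs _ _
    _ ≤ ∑ i, q i * M := sum_le_sum fun i _ => by
        rw [abs_mul, abs_of_nonneg (hq0 i)]
        exact mul_le_mul_of_nonneg_left (hf i) (hq0 i)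
    _ = M := by rw [← sum_mul, hq1, one_mul]

lemma abs_dotProduct_le_dotProduct {ρ x e : ι → ℝ} (hρ : 0 ≤ ρ) (hx : ∀ i, |x i| ≤ e i) :
    |ρ ⬝ᵥ x| ≤ ρ ⬝ᵥ e :=
  calc |ρ ⬝ᵥ x| ≤ ∑ i, |ρ i * x i| := abs_sum_le_sum_abs _ _
    _ ≤ ρ ⬝ᵥ e := sum_le_sum fun i _ => by
        rw [abs_mul, abs_of_nonneg (hρ i)]
        exact mul_le_mul_of_nonneg_left (hx i) (hρ i)

lemma abs_sum_sub_mul_le {u v x : ι → ℝ} {M : ℝ} (hx : ∀ i, |x i| ≤ M) :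
    |∑ i, (u i - v i) * x i| ≤ (∑ i, |u i - v i|) * M :=
  calc |∑ i, (u i - v i) * x i| ≤ ∑ i, |(u i - v i) * x i| := abs_sum_le_sum_abs _ _
    _ ≤ (∑ i, |u i - v i|) * M := by
        rw [sum_mul]
        exact sum_le_sum fun i _ => by
          rw [abs_mul]; exact mul_le_mul_of_nonneg_left (hx i) (abs_nonneg _)

lemma abs_sum_mul_le_of_sum_mul_eq_zero {u v x : ι → ℝ} {M : ℝ}
    (hv : ∑ i, v i * x i = 0) (hx : ∀ i, |x i| ≤ M) :
    |∑ i, u i * x i| ≤ (∑ i, |u i - v i|) * M := by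
  have : ∑ i, u i * x i = ∑ i, (u i - v i) * x i := by
    simp only [sub_mul, sum_sub_distrib, hv, sub_zero]
  exact this ▸ abs_sum_sub_mul_le hx

end FiniteSums

section Stochastic

variable {S : Type*} [Fintype S] [DecidableEq S] {P : Matrix S S ℝ} {γ : ℝ}

lemma abs_mulVec_le_of_mem_rowStochastic (hP : P ∈ rowStochastic ℝ S) {f : S → ℝ} {M : ℝ}
    (hf : ∀ s, |f s| ≤ M) (s : S) : |(P *ᵥ f) s| ≤ M :=
  abs_dotProduct_le_of_sum_eq_one (fun _ => nonneg_of_mem_rowStochastic hP)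
    (sum_row_of_mem_rowStochastic hP s) hf

lemma abs_le_of_eq_add_smul_mulVec (hP : P ∈ rowStochastic ℝ S) (hγ0 : 0 ≤ γ) (hγ1 : γ < 1)
    {g h : S → ℝ} (hh : h = g + γ • P *ᵥ h) {G : ℝ} (hg : ∀ s, |g s| ≤ G) (s : S) :
    |h s| ≤ G / (1 - γ) := by
  have : Nonempty S := ⟨s⟩
  obtain ⟨s₀, hs₀⟩ := Finite.exists_max fun s => |h s|
  have hmax : |h s₀| ≤ G + γ * |h s₀| :=
    calc |h s₀| = |g s₀ + γ * (P *ᵥ h) s₀| := by rw [congrFun hh s₀]; rfl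
      _ ≤ |g s₀| + γ * |(P *ᵥ h) s₀| := by
          rw [← abs_of_nonneg hγ0, ← abs_mul, abs_of_nonneg hγ0]; exact abs_add_le _ _
      _ ≤ G + γ * |h s₀| := add_le_add (hg s₀)
          (mul_le_mul_of_nonneg_left (abs_mulVec_le_of_mem_rowStochastic hP hs₀ s₀) hγ0)
  rw [le_div_iff₀ (by linarith)]
  nlinarith [hs₀ s]

lemma exists_eq_add_smul_mulVec (hP : P ∈ rowStochastic ℝ S) (hγ0 : 0 ≤ γ) (hγ1 : γ < 1)
    (g : S → ℝ) : ∃ h, h = g + γ • P *ᵥ h := by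
  -- The bound with `g = 0` makes `I - γ P` injective, hence surjective.
  let L : (S → ℝ) →ₗ[ℝ] (S → ℝ) := LinearMap.id - γ • P.mulVecLin
  have hL : ∀ h, L h = h - γ • P *ᵥ h := fun _ => rfl
  have hinj : Function.Injective L := by
    rw [← LinearMap.ker_eq_bot, LinearMap.ker_eq_bot']
    intro h hLh
    funext s
    have hfix : h = 0 + γ • P *ᵥ h := by rw [zero_add, ← sub_eq_zero, ← hL, hLh]
    simpa using abs_le_of_eq_add_smul_mulVec hP hγ0 hγ1 hfix (G := 0) (by simp) s
  obtain ⟨h, hh⟩ := LinearMap.injective_iff_surjective.mp hinj g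
  exact ⟨h, by rw [← hh, hL, sub_add_cancel]⟩

lemma nonneg_of_eq_add_smul_vecMul (hP : P ∈ rowStochastic ℝ S) (hγ0 : 0 ≤ γ) (hγ1 : γ < 1)
    {d ρ : S → ℝ} (hd : 0 ≤ d) (hρ : ρ = d + γ • ρ ᵥ* P) : 0 ≤ ρ := by
  -- The negative part `n` of `ρ` satisfies `n ≤ γ n P`; summing, `∑ n ≤ γ ∑ n`.
  set n : S → ℝ := fun s => (ρ s)⁻
  have hn0 : 0 ≤ n := fun s => negPart_nonneg _
  have hn : n ≤ γ • n ᵥ* P := by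
    intro s
    have hnP : 0 ≤ (n ᵥ* P) s := nonneg_vecMul_of_mem_rowStochastic hP hn0 s
    refine max_le ?_ (by simpa using mul_nonneg hγ0 hnP)
    have hneg : -ρ ≤ n := fun s => neg_le_negPart _
    have : ((-ρ) ᵥ* P) s ≤ (n ᵥ* P) s :=
      dotProduct_le_dotProduct_of_nonneg_right hneg fun s' => nonneg_of_mem_rowStochastic hP
    have hρs : ρ s = d s + γ * (ρ ᵥ* P) s := congrFun hρ s
    simp only [neg_vecMul, Pi.neg_apply] at this
    simp only [Pi.smul_apply, smul_eq_mul]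
    have hds : 0 ≤ d s := hd s
    nlinarith [mul_le_mul_of_nonneg_left this hγ0]
  have hsum : n ⬝ᵥ 1 ≤ γ * n ⬝ᵥ 1 :=
    calc n ⬝ᵥ 1 ≤ (γ • n ᵥ* P) ⬝ᵥ 1 := dotProduct_le_dotProduct_of_nonneg_right hn zero_le_one
      _ = γ * n ⬝ᵥ 1 := by
        rw [smul_dotProduct, ← dotProduct_mulVec, one_vecMul_of_mem_rowStochastic hP, smul_eq_mul]
  have hzero : n ⬝ᵥ 1 = 0 := by
    have := dotProduct_nonneg_of_nonneg hn0 zero_le_one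
    nlinarith
  intro s
  have : n s = 0 := by
    simp only [dotProduct, Pi.one_apply, mul_one] at hzero
    exact (sum_eq_zero_iff_of_nonneg fun s _ => hn0 s).mp hzero s (mem_univ s)
  exact negPart_eq_zero.mp this

end Stochastic

section Identity

variable {R S : Type*} [CommRing R] [Fintype S] {γ : R}

lemma dotProduct_eq_of_eq_add_smul_mulVec {P : Matrix S S R} {g h : S → R}
    (hh : h = g + γ • P *ᵥ h) (v : S → R) : v ⬝ᵥ h = v ⬝ᵥ g + γ * v ⬝ᵥ (P *ᵥ h) := by
  conv_lhs => rw [hh]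
  rw [dotProduct_add, dotProduct_smul, smul_eq_mul]

lemma dotProduct_eq_of_eq_add_smul_vecMul {P : Matrix S S R} {d ρ : S → R}
    (hρ : ρ = d + γ • ρ ᵥ* P) (f : S → R) : ρ ⬝ᵥ f = d ⬝ᵥ f + γ * ρ ⬝ᵥ (P *ᵥ f) := by
  conv_lhs => rw [hρ]
  rw [add_dotProduct, smul_dotProduct, smul_eq_mul, dotProduct_mulVec]

lemma dotProduct_eq_add_sub_of_resolvents {Pπ Pβ PD : Matrix S S R} {d ρβ ρD g W h : S → R}
    (hW : W = g + γ • Pπ *ᵥ W) (hh : h = g + γ • Pβ *ᵥ h)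
    (hρβ : ρβ = d + γ • ρβ ᵥ* Pβ) (hρD : ρD = d + γ • ρD ᵥ* PD) :
    d ⬝ᵥ W = ρD ⬝ᵥ g + γ * ρβ ⬝ᵥ ((Pπ - Pβ) *ᵥ W) - γ * ρD ⬝ᵥ ((PD - Pβ) *ᵥ h) := by
  rw [sub_mulVec, sub_mulVec, dotProduct_sub, dotProduct_sub]
  linear_combination dotProduct_eq_of_eq_add_smul_mulVec hW ρβ
    - dotProduct_eq_of_eq_add_smul_vecMul hρβ W
    + dotProduct_eq_of_eq_add_smul_vecMul hρβ h - dotProduct_eq_of_eq_add_smul_mulVec hh ρβ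
    + dotProduct_eq_of_eq_add_smul_mulVec hh ρD - dotProduct_eq_of_eq_add_smul_vecMul hρD h

end Identity

section Policy

variable {S A : Type*} [Fintype S] [Fintype A]

def policyTransition (p : S → A → S → ℝ) (π : S → A → ℝ) : Matrix S S ℝ :=
  of fun s s' => ∑ a, π s a * p s a s'

def qValue (p : S → A → S → ℝ) (r : S → A → ℝ) (γ : ℝ) (V : S → ℝ) (s : S) (a : A) : ℝ :=
  r s a + γ * ∑ s', p s a s' * V s'

def advantage (p : S → A → S → ℝ) (r : S → A → ℝ) (γ : ℝ) (V : S → ℝ) (s : S) (a : A) : ℝ :=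
  qValue p r γ V s a - V s

noncomputable def tvDist (π π' : S → A → ℝ) (s : S) : ℝ := (1 / 2) * ∑ a, |π s a - π' s a|

variable {p : S → A → S → ℝ}

lemma policyTransition_mulVec (π : S → A → ℝ) (f : S → ℝ) (s : S) :
    (policyTransition p π *ᵥ f) s = ∑ a, π s a * ∑ s', p s a s' * f s' := by
  simp only [policyTransition, mulVec, dotProduct, of_apply, sum_mul, mul_sum]
  rw [sum_comm]
  simp only [mul_assoc]

lemma policyTransition_mem_rowStochastic [DecidableEq S] (hp0 : ∀ s a s', 0 ≤ p s a s')
    (hp1 : ∀ s a, ∑ s', p s a s' = 1) {π : S → A → ℝ} (hπ0 : ∀ s a, 0 ≤ π s a)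
    (hπ1 : ∀ s, ∑ a, π s a = 1) : policyTransition p π ∈ rowStochastic ℝ S := by
  refine mem_rowStochastic.mpr
    ⟨fun s s' => sum_nonneg fun a _ => mul_nonneg (hπ0 s a) (hp0 s a s'), funext fun s => ?_⟩
  rw [policyTransition_mulVec]
  simp [hp1, hπ1]

lemma abs_policyTransition_sub_mulVec_le (hp0 : ∀ s a s', 0 ≤ p s a s')
    (hp1 : ∀ s a, ∑ s', p s a s' = 1) (π π' : S → A → ℝ) {f : S → ℝ} {M : ℝ}
    (hf : ∀ s, |f s| ≤ M) (s : S) :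
    |((policyTransition p π - policyTransition p π') *ᵥ f) s| ≤ 2 * M * tvDist π π' s := by
  rw [sub_mulVec, Pi.sub_apply, policyTransition_mulVec, policyTransition_mulVec,
    ← sum_sub_distrib]
  simp only [← sub_mul]
  calc _ ≤ (∑ a, |π s a - π' s a|) * M :=
        abs_sum_sub_mul_le fun a => abs_dotProduct_le_of_sum_eq_one (hp0 s a) (hp1 s a) hf
    _ = 2 * M * tvDist π π' s := by rw [tvDist]; ring

lemma value_sub_eq {γ : ℝ} {r : S → A → ℝ} {π : S → A → ℝ} (hπ1 : ∀ s, ∑ a, π s a = 1)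
    {V V' : S → ℝ} (hV : ∀ s, V s = ∑ a, π s a * qValue p r γ V s a) :
    V - V' = (fun s => ∑ a, π s a * advantage p r γ V' s a)
      + γ • policyTransition p π *ᵥ (V - V') := by
  funext s
  simp only [Pi.add_apply, Pi.smul_apply, smul_eq_mul, policyTransition_mulVec, Pi.sub_apply]
  calc V s - V' s = ∑ a, (π s a * qValue p r γ V s a - π s a * V' s) := by
        rw [sum_sub_distrib, ← sum_mul, hπ1, one_mul, hV s]
    _ = ∑ a, (π s a * advantage p r γ V' s a
          + γ * (π s a * ∑ s', p s a s' * (V s' - V' s'))) :=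
        sum_congr rfl fun a _ => by simp only [advantage, qValue, mul_sub, sum_sub_distrib]; ring
    _ = _ := by rw [sum_add_distrib, ← mul_sum]

lemma abs_sum_mul_advantage_le {r : S → A → ℝ} {γ : ℝ} {π πβ : S → A → ℝ} {Vβ : S → ℝ} {s : S}
    (hπβ1 : ∑ a, πβ s a = 1) (hVβ : Vβ s = ∑ a, πβ s a * qValue p r γ Vβ s a) {M : ℝ}
    (hM : ∀ a, |advantage p r γ Vβ s a| ≤ M) :
    |∑ a, π s a * advantage p r γ Vβ s a| ≤ 2 * tvDist π πβ s * M := by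
  have hzero : ∑ a, πβ s a * advantage p r γ Vβ s a = 0 := by
    simp only [advantage, mul_sub, sum_sub_distrib, ← sum_mul, hπβ1, one_mul, ← hVβ, sub_self]
  calc _ ≤ (∑ a, |π s a - πβ s a|) * M := abs_sum_mul_le_of_sum_mul_eq_zero hzero hM
    _ = 2 * tvDist π πβ s * M := by rw [tvDist]; ring

end Policy

section Bound

variable {S A : Type*} [Fintype S] [Fintype A] [DecidableEq S] {p : S → A → S → ℝ}

theorem dotProduct_value_gap_ge (hp0 : ∀ s a s', 0 ≤ p s a s') (hp1 : ∀ s a, ∑ s', p s a s' = 1)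
    {γ : ℝ} (hγ0 : 0 ≤ γ) (hγ1 : γ < 1) {d : S → ℝ} (hd : 0 ≤ d) {π πβ πD : S → A → ℝ}
    (hπ0 : ∀ s a, 0 ≤ π s a) (hπ1 : ∀ s, ∑ a, π s a = 1)
    (hπβ0 : ∀ s a, 0 ≤ πβ s a) (hπβ1 : ∀ s, ∑ a, πβ s a = 1)
    (hπD0 : ∀ s a, 0 ≤ πD s a) (hπD1 : ∀ s, ∑ a, πD s a = 1)
    {g W : S → ℝ} (hW : W = g + γ • policyTransition p π *ᵥ W) {ρβ ρD : S → ℝ}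
    (hρβ : ρβ = d + γ • ρβ ᵥ* policyTransition p πβ)
    (hρD : ρD = d + γ • ρD ᵥ* policyTransition p πD) {G : ℝ} (hg : ∀ s, |g s| ≤ G) :
    ρD ⬝ᵥ g - 2 * γ / (1 - γ) * G * ρβ ⬝ᵥ tvDist π πβ
      - 2 * γ / (1 - γ) * G * ρD ⬝ᵥ tvDist πD πβ ≤ d ⬝ᵥ W := by
  have hPπ := policyTransition_mem_rowStochastic hp0 hp1 hπ0 hπ1
  have hPβ := policyTransition_mem_rowStochastic hp0 hp1 hπβ0 hπβ1
  have hPD := policyTransition_mem_rowStochastic hp0 hp1 hπD0 hπD1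
  obtain ⟨h, hh⟩ := exists_eq_add_smul_mulVec hPβ hγ0 hγ1 g
  set B := G / (1 - γ)
  have hβ : |ρβ ⬝ᵥ ((policyTransition p π - policyTransition p πβ) *ᵥ W)|
      ≤ ρβ ⬝ᵥ ((2 * B) • tvDist π πβ) :=
    abs_dotProduct_le_dotProduct (nonneg_of_eq_add_smul_vecMul hPβ hγ0 hγ1 hd hρβ)
      (abs_policyTransition_sub_mulVec_le hp0 hp1 π πβ
        (abs_le_of_eq_add_smul_mulVec hPπ hγ0 hγ1 hW hg))
  have hD : |ρD ⬝ᵥ ((policyTransition p πD - policyTransition p πβ) *ᵥ h)|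
      ≤ ρD ⬝ᵥ ((2 * B) • tvDist πD πβ) :=
    abs_dotProduct_le_dotProduct (nonneg_of_eq_add_smul_vecMul hPD hγ0 hγ1 hd hρD)
      (abs_policyTransition_sub_mulVec_le hp0 hp1 πD πβ
        (abs_le_of_eq_add_smul_mulVec hPβ hγ0 hγ1 hh hg))
  rw [dotProduct_smul, smul_eq_mul] at hβ hD
  rw [dotProduct_eq_add_sub_of_resolvents hW hh hρβ hρD]
  have hcoef : 2 * γ / (1 - γ) * G = γ * (2 * B) := by ring
  rw [hcoef]
  linarith [mul_le_mul_of_nonneg_left (abs_le.mp hβ).1 hγ0,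
    mul_le_mul_of_nonneg_left (abs_le.mp hD).2 hγ0]

end Bound

theorem offline_improvement_bound_behavior_general
    {S A : Type*} [Fintype S] [Fintype A] [Nonempty S] [Nonempty A]
    -- transition kernel
    (p : S → A → S → ℝ)
    (hp0 : ∀ s a s', 0 ≤ p s a s') (hp1 : ∀ s a, ∑ s', p s a s' = 1)
    -- discount factor
    (γ : ℝ) (hγ0 : 0 ≤ γ) (hγ1 : γ < 1)
    -- initial state distribution
    (d0 : S → ℝ) (hd00 : ∀ s, 0 ≤ d0 s)
    -- reward function
    (r : S → A → ℝ)
    -- policies: target π, estimated behavior π̂β, dataset policy π_D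
    (π πβ πD : S → A → ℝ)
    (hπ0 : ∀ s a, 0 ≤ π s a) (hπ1 : ∀ s, ∑ a, π s a = 1)
    (hπβ0 : ∀ s a, 0 ≤ πβ s a) (hπβ1 : ∀ s, ∑ a, πβ s a = 1)
    (hπD0 : ∀ s a, 0 ≤ πD s a) (hπD1 : ∀ s, ∑ a, πD s a = 1)
    -- value functions of π and π̂β (Bellman equations)
    (V Vβ : S → ℝ)
    (hV : ∀ s, V s = ∑ a, π s a * (r s a + γ * ∑ s', p s a s' * V s'))
    (hVβ : ∀ s, Vβ s = ∑ a, πβ s a * (r s a + γ * ∑ s', p s a s' * Vβ s'))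
    -- discounted visitation frequencies of π̂β and of the dataset policy π_D
    (ρβ ρD : S → ℝ)
    (hρβ : ∀ s', ρβ s' = d0 s' + γ * ∑ s, ρβ s * (∑ a, πβ s a * p s a s'))
    (hρD : ∀ s', ρD s' = d0 s' + γ * ∑ s, ρD s * (∑ a, πD s a * p s a s')) :
    (∑ s, d0 s * V s) - (∑ s, d0 s * Vβ s)
      ≥ (∑ s, ρD s * ∑ a, π s a * ((r s a + γ * ∑ s', p s a s' * Vβ s') - Vβ s))
        - (4 * γ / (1 - γ))
            * (univ.sup' univ_nonempty fun sa : S × A =>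
                |(r sa.1 sa.2 + γ * ∑ s', p sa.1 sa.2 s' * Vβ s') - Vβ sa.1|)
            * (univ.sup' univ_nonempty fun s =>
                (1 / 2) * ∑ a, |π s a - πβ s a|)
            * (∑ s, ρβ s * ((1 / 2) * ∑ a, |π s a - πβ s a|))
        - (4 * γ / (1 - γ))
            * (univ.sup' univ_nonempty fun sa : S × A =>
                |(r sa.1 sa.2 + γ * ∑ s', p sa.1 sa.2 s' * Vβ s') - Vβ sa.1|)
            * (univ.sup' univ_nonempty fun s =>
                (1 / 2) * ∑ a, |π s a - πβ s a|)
            * (∑ s, ρD s * ((1 / 2) * ∑ a, |πD s a - πβ s a|)) := by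
  classical
  set 𝔸 := univ.sup' univ_nonempty fun sa : S × A =>
    |(r sa.1 sa.2 + γ * ∑ s', p sa.1 sa.2 s' * Vβ s') - Vβ sa.1|
  set ε := univ.sup' univ_nonempty fun s => (1 / 2) * ∑ a, |π s a - πβ s a|
  have h𝔸 : ∀ s a, |advantage p r γ Vβ s a| ≤ 𝔸 := fun s a =>
    le_sup' (fun sa : S × A => |advantage p r γ Vβ sa.1 sa.2|) (mem_univ (s, a))
  have hε : ∀ s, tvDist π πβ s ≤ ε := fun s => le_sup' (tvDist π πβ) (mem_univ s)
  have h𝔸0 : 0 ≤ 𝔸 := (abs_nonneg _).trans (h𝔸 (Classical.arbitrary S) (Classical.arbitrary A))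
  have hg : ∀ s, |∑ a, π s a * advantage p r γ Vβ s a| ≤ 2 * 𝔸 * ε := fun s =>
    calc _ ≤ 2 * tvDist π πβ s * 𝔸 := abs_sum_mul_advantage_le (hπβ1 s) (hVβ s) (h𝔸 s)
      _ ≤ 2 * 𝔸 * ε := by nlinarith [hε s]
  have key := dotProduct_value_gap_ge hp0 hp1 hγ0 hγ1 hd00 hπ0 hπ1 hπβ0 hπβ1 hπD0 hπD1
    (value_sub_eq hπ1 hV) (funext hρβ) (funext hρD) hg
  rw [dotProduct_sub, show 2 * γ / (1 - γ) * (2 * 𝔸 * ε) = 4 * γ / (1 - γ) * 𝔸 * ε by ring]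
    at key
  exact key

/-- Theorem 2: offline monotonic improvement bound over the behavior policy. -/
theorem offline_improvement_bound_behavior
    {S A : Type*} [Fintype S] [Fintype A] [Nonempty S] [Nonempty A]
    -- transition kernel
    (p : S → A → S → ℝ)
    (hp0 : ∀ s a s', 0 ≤ p s a s') (hp1 : ∀ s a, ∑ s', p s a s' = 1)
    -- discount factor
    (γ : ℝ) (hγ0 : 0 ≤ γ) (hγ1 : γ < 1)
    -- initial state distribution
    (d0 : S → ℝ) (hd00 : ∀ s, 0 ≤ d0 s) (hd01 : ∑ s, d0 s = 1)
    -- reward function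
    (r : S → A → ℝ)
    -- policies: target π, estimated behavior π̂β, dataset policy π_D
    (π πβ πD : S → A → ℝ)
    (hπ0 : ∀ s a, 0 ≤ π s a) (hπ1 : ∀ s, ∑ a, π s a = 1)
    (hπβ0 : ∀ s a, 0 ≤ πβ s a) (hπβ1 : ∀ s, ∑ a, πβ s a = 1)
    (hπD0 : ∀ s a, 0 ≤ πD s a) (hπD1 : ∀ s, ∑ a, πD s a = 1)
    -- value functions of π and π̂β (Bellman equations)
    (V Vβ : S → ℝ)
    (hV : ∀ s, V s = ∑ a, π s a * (r s a + γ * ∑ s', p s a s' * V s'))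
    (hVβ : ∀ s, Vβ s = ∑ a, πβ s a * (r s a + γ * ∑ s', p s a s' * Vβ s'))
    -- discounted visitation frequencies of π̂β and of the dataset policy π_D
    (ρβ ρD : S → ℝ)
    (hρβ : ∀ s', ρβ s' = d0 s' + γ * ∑ s, ρβ s * (∑ a, πβ s a * p s a s'))
    (hρD : ∀ s', ρD s' = d0 s' + γ * ∑ s, ρD s * (∑ a, πD s a * p s a s')) :
    (∑ s, d0 s * V s) - (∑ s, d0 s * Vβ s)
      ≥ (∑ s, ρD s * ∑ a, π s a * ((r s a + γ * ∑ s', p s a s' * Vβ s') - Vβ s))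
        - (4 * γ / (1 - γ))
            * (univ.sup' univ_nonempty fun sa : S × A =>
                |(r sa.1 sa.2 + γ * ∑ s', p sa.1 sa.2 s' * Vβ s') - Vβ sa.1|)
            * (univ.sup' univ_nonempty fun s =>
                (1 / 2) * ∑ a, |π s a - πβ s a|)
            * (∑ s, ρβ s * ((1 / 2) * ∑ a, |π s a - πβ s a|))
        - (4 * γ / (1 - γ))
            * (univ.sup' univ_nonempty fun sa : S × A =>
                |(r sa.1 sa.2 + γ * ∑ s', p sa.1 sa.2 s' * Vβ s') - Vβ sa.1|)
            * (univ.sup' univ_nonempty fun s =>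
                (1 / 2) * ∑ a, |π s a - πβ s a|)
            * (∑ s, ρD s * ((1 / 2) * ∑ a, |πD s a - πβ s a|)) :=
  offline_improvement_bound_behavior_general p hp0 hp1 γ hγ0 hγ1 d0 hd00 r π πβ πD hπ0 hπ1 hπβ0 hπβ1
    hπD0 hπD1 V Vβ hV hVβ ρβ ρD hρβ hρD
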